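/- Let G be a finite simple graph and let M be a 2-limited spanning subgraph of G with exactly 2r vertices of degree 1 in M (all other vertices having degree 2 in M). If there exist r pairwise vertex-disjoint M-augmenting paths in G, then G has a 2-factor. -/

import Mathlib

open SimpleGraph

variable {V : Type*}

/-- `M` is a 2-limited spanning subgraph of `G`: it contains every vertex and
every vertex has degree 1 or 2 in `M`. -/
def IsTwoLimited {G : SimpleGraph V} (M : G.Subgraph) : Prop :=
  M.IsSpanning ∧ ∀ v : V, 1 ≤ (M.neighborSet v).ncard ∧ (M.neighborSet v).ncard ≤ 2

/-- An `M`-augmenting path: a path in `G` whose edges alternately lie outside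
`M` (the even-indexed ones, in particular the first and the last — so the
length is odd) and inside `M`, and whose two endpoints are unfilled, i.e. have
degree 1 in `M`. -/
def IsAugmentingPath {G : SimpleGraph V} (M : G.Subgraph) {u v : V}
    (p : G.Walk u v) : Prop :=
  p.IsPath ∧ Odd p.length ∧
    (M.neighborSet u).ncard = 1 ∧ (M.neighborSet v).ncard = 1 ∧
    ∀ (i : ℕ) (h : i < p.edges.length),
      (p.edges.get ⟨i, h⟩ ∈ M.edgeSet ↔ i % 2 = 1)

/-!
Let `P` be the union of the given paths and take `F = M ∆ P`. At a vertex on no path, `F`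
agrees with `M`. At an endpoint of a path, `M` has one edge and the path contributes one edge
not in `M`. At an internal vertex, the path contributes two edges of which exactly one lies
in `M`, so `F` trades it for the other. Hence every vertex has degree 2 in `F` once we know
that it has degree 2 in `M` unless it is a path endpoint; that follows by counting, since the
`r` disjoint paths have `2r` distinct endpoints, all unfilled, and there are only `2r`
unfilled vertices.
-/

open scoped symmDiff

theorem Set.ncard_symmDiff_add_two_mul_ncard_inter {α : Type*} {s t : Set α}
    (hs : s.Finite) (ht : t.Finite) :
    (s ∆ t).ncard + 2 * (s ∩ t).ncard = s.ncard + t.ncard := by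
  rw [Set.symmDiff_def, Set.ncard_union_eq disjoint_sdiff_sdiff hs.sdiff ht.sdiff,
    ← Set.ncard_inter_add_ncard_sdiff_eq_ncard s t hs,
    ← Set.ncard_inter_add_ncard_sdiff_eq_ncard t s ht, Set.inter_comm t s]
  ring

theorem Set.ncard_symmDiff_singleton_of_notMem {α : Type*} {s : Set α} {a : α}
    (hs : s.Finite) (ha : a ∉ s) : (s ∆ {a}).ncard = s.ncard + 1 := by
  have := Set.ncard_symmDiff_add_two_mul_ncard_inter hs (Set.finite_singleton a)
  rwa [Set.inter_singleton_eq_empty.mpr ha, Set.ncard_empty, Set.ncard_singleton] at this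

theorem SimpleGraph.neighborSet_symmDiff (G₁ G₂ : SimpleGraph V) (v : V) :
    (G₁ ∆ G₂).neighborSet v = G₁.neighborSet v ∆ G₂.neighborSet v := by
  ext w
  simp [symmDiff_def]

theorem SimpleGraph.Subgraph.exists_isSpanning_neighborSet_eq_symmDiff {G : SimpleGraph V}
    (M N : G.Subgraph) :
    ∃ F : G.Subgraph, F.IsSpanning ∧
      ∀ v, F.neighborSet v = M.neighborSet v ∆ N.neighborSet v :=
  ⟨toSubgraph (M.spanningCoe ∆ N.spanningCoe)
      (symmDiff_le_sup.trans (sup_le M.spanningCoe_le N.spanningCoe_le)),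
    toSubgraph.isSpanning _ _, fun v => neighborSet_symmDiff _ _ v⟩

namespace IsAugmentingPath

variable {G : SimpleGraph V} {M : G.Subgraph} {u w : V} {p : G.Walk u w}

theorem isPath (hp : IsAugmentingPath M p) : p.IsPath := hp.1

theorem odd_length (hp : IsAugmentingPath M p) : Odd p.length := hp.2.1

theorem ncard_neighborSet_start (hp : IsAugmentingPath M p) : (M.neighborSet u).ncard = 1 :=
  hp.2.2.1

theorem ncard_neighborSet_end (hp : IsAugmentingPath M p) : (M.neighborSet w).ncard = 1 :=
  hp.2.2.2.1

theorem adj_getVert_iff (hp : IsAugmentingPath M p) {i : ℕ} (hi : i < p.length) :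
    M.Adj (p.getVert i) (p.getVert (i + 1)) ↔ Odd i := by
  have := hp.2.2.2.2 i (by simpa using hi)
  rwa [List.get_eq_getElem, Walk.getElem_edges, Subgraph.mem_edgeSet, ← Nat.odd_iff] at this

theorem not_nil (hp : IsAugmentingPath M p) : ¬ p.Nil :=
  Walk.not_nil_iff_lt_length.mpr hp.odd_length.pos

theorem ne (hp : IsAugmentingPath M p) : u ≠ w := fun h =>
  hp.odd_length.pos.ne' <|
    (hp.isPath.getVert_eq_start_iff le_rfl).mp (by rw [Walk.getVert_length, h])

theorem ncard_symmDiff_neighborSet_start (hp : IsAugmentingPath M p) :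
    (M.neighborSet u ∆ p.toSubgraph.neighborSet u).ncard = 2 := by
  have hsnd : p.snd ∉ M.neighborSet u := by
    simpa using (hp.adj_getVert_iff hp.odd_length.pos).not.mpr (by decide)
  rw [hp.isPath.neighborSet_toSubgraph_startpoint hp.not_nil,
    Set.ncard_symmDiff_singleton_of_notMem
      (Set.finite_of_ncard_pos (hp.ncard_neighborSet_start ▸ Nat.one_pos))
      hsnd, hp.ncard_neighborSet_start]

theorem ncard_symmDiff_neighborSet_end (hp : IsAugmentingPath M p) :
    (M.neighborSet w ∆ p.toSubgraph.neighborSet w).ncard = 2 := by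
  have hpen : p.penultimate ∉ M.neighborSet w := by
    have := (hp.adj_getVert_iff (i := p.length - 1) (by have := hp.odd_length.pos; omega)).not.mpr
      (Nat.not_odd_iff_even.mpr (Nat.Odd.sub_odd hp.odd_length odd_one))
    rwa [Nat.sub_one_add_one hp.odd_length.pos.ne', Walk.getVert_length, M.adj_comm] at this
  rw [hp.isPath.neighborSet_toSubgraph_endpoint hp.not_nil,
    Set.ncard_symmDiff_singleton_of_notMem
      (Set.finite_of_ncard_pos (hp.ncard_neighborSet_end ▸ Nat.one_pos))
      hpen, hp.ncard_neighborSet_end]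

theorem ncard_symmDiff_neighborSet_internal (hp : IsAugmentingPath M p) {k : ℕ} (hk0 : k ≠ 0)
    (hk : k < p.length) (hdeg : (M.neighborSet (p.getVert k)).ncard = 2) :
    (M.neighborSet (p.getVert k) ∆ p.toSubgraph.neighborSet (p.getVert k)).ncard = 2 := by
  have hprev : p.getVert (k - 1) ∈ M.neighborSet (p.getVert k) ↔ Odd (k - 1) := by
    rw [Subgraph.mem_neighborSet, M.adj_comm, ← hp.adj_getVert_iff (by omega),
      Nat.sub_add_cancel (by omega)]
  have hnext : p.getVert (k + 1) ∈ M.neighborSet (p.getVert k) ↔ Odd k := hp.adj_getVert_iff hk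
  have hinter :
      ({p.getVert (k - 1), p.getVert (k + 1)} ∩ M.neighborSet (p.getVert k)).ncard = 1 := by
    rcases Nat.even_or_odd k with hev | hodd
    · rw [Set.insert_inter_of_mem (hprev.mpr (Nat.Even.sub_odd (by omega) hev odd_one)),
        Set.singleton_inter_eq_empty.mpr (hnext.not.mpr (Nat.not_odd_iff_even.mpr hev))]
      simp
    · rw [Set.pair_comm, Set.insert_inter_of_mem (hnext.mpr hodd),
        Set.singleton_inter_eq_empty.mpr
          (hprev.not.mpr (Nat.not_odd_iff_even.mpr (Nat.Odd.sub_odd hodd odd_one)))]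
      simp
  have := Set.ncard_symmDiff_add_two_mul_ncard_inter
    (Set.finite_of_ncard_pos (hdeg ▸ Nat.two_pos))
    (p.finite_neighborSet_toSubgraph (w := p.getVert k))
  rw [hp.isPath.ncard_neighborSet_toSubgraph_internal_eq_two hk0 hk, hdeg,
    hp.isPath.neighborSet_toSubgraph_internal hk0 hk, Set.inter_comm, hinter] at this
  rw [hp.isPath.neighborSet_toSubgraph_internal hk0 hk]
  omega

theorem ncard_symmDiff_neighborSet (hp : IsAugmentingPath M p) {v : V} (hv : v ∈ p.support)
    (hdeg : v ≠ u → v ≠ w → (M.neighborSet v).ncard = 2) :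
    (M.neighborSet v ∆ p.toSubgraph.neighborSet v).ncard = 2 := by
  obtain ⟨k, rfl, hk⟩ := Walk.mem_support_iff_exists_getVert.mp hv
  by_cases hk0 : k = 0
  · subst hk0
    simpa using hp.ncard_symmDiff_neighborSet_start
  by_cases hkl : k = p.length
  · subst hkl
    simpa using hp.ncard_symmDiff_neighborSet_end
  exact hp.ncard_symmDiff_neighborSet_internal hk0 (by omega)
    (hdeg (by rwa [Ne, hp.isPath.getVert_eq_start_iff hk])
      (by rwa [Ne, hp.isPath.getVert_eq_end_iff hk]))

end IsAugmentingPath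

section PathFamily

variable {G : SimpleGraph V} {ι : Type*} {e : ι → V × V} {p : ∀ i, G.Walk (e i).1 (e i).2}

theorem neighborSet_iSup_toSubgraph_of_mem
    (hdisj : ∀ i j, i ≠ j → ∀ x : V, x ∈ (p i).support → x ∉ (p j).support)
    {i : ι} {v : V} (hv : v ∈ (p i).support) :
    (⨆ j, (p j).toSubgraph).neighborSet v = (p i).toSubgraph.neighborSet v := by
  ext x
  simp only [Subgraph.neighborSet_iSup, Set.mem_iUnion, Subgraph.mem_neighborSet]
  refine ⟨fun ⟨j, hj⟩ => ?_, fun h => ⟨i, h⟩⟩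
  obtain rfl : j = i := by
    by_contra hji
    exact hdisj i j (Ne.symm hji) v hv (Walk.mem_support_of_adj_toSubgraph hj)
  exact hj

theorem neighborSet_iSup_toSubgraph_of_forall_notMem {v : V} (hv : ∀ i, v ∉ (p i).support) :
    (⨆ j, (p j).toSubgraph).neighborSet v = ∅ := by
  ext x
  simp only [Subgraph.neighborSet_iSup, Set.mem_iUnion, Subgraph.mem_neighborSet,
    Set.mem_empty_iff_false, iff_false, not_exists]
  exact fun i h => hv i (Walk.mem_support_of_adj_toSubgraph h)

theorem exists_endpoint_of_ncard_neighborSet_eq_one [Finite V] [Fintype ι] {M : G.Subgraph}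
    (hp : ∀ i, IsAugmentingPath M (p i))
    (hdisj : ∀ i j, i ≠ j → ∀ x : V, x ∈ (p i).support → x ∉ (p j).support)
    (hcard : {x : V | (M.neighborSet x).ncard = 1}.ncard = 2 * Fintype.card ι)
    {x : V} (hx : (M.neighborSet x).ncard = 1) : ∃ i, x = (e i).1 ∨ x = (e i).2 := by
  let endpoint : ι ⊕ ι → V := Sum.elim (fun i => (e i).1) (fun i => (e i).2)
  have hsame : ∀ i j, ∀ x ∈ (p i).support, x ∈ (p j).support → i = j :=
    fun i j x hi hj => by_contra fun hij => hdisj i j hij x hi hj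
  have hinj : endpoint.Injective := by
    rintro (i | i) (j | j) h <;> simp only [endpoint, Sum.elim_inl, Sum.elim_inr] at h
    · rw [hsame i j _ (p i).start_mem_support (by rw [h]; exact (p j).start_mem_support)]
    · obtain rfl := hsame i j _ (p i).start_mem_support (by rw [h]; exact (p j).end_mem_support)
      exact absurd h (hp i).ne
    · obtain rfl := hsame i j _ (p i).end_mem_support (by rw [h]; exact (p j).start_mem_support)
      exact absurd h.symm (hp i).ne
    · rw [hsame i j _ (p i).end_mem_support (by rw [h]; exact (p j).end_mem_support)]
  have hsub : Set.range endpoint ⊆ {x : V | (M.neighborSet x).ncard = 1} := by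
    rintro _ ⟨i | i, rfl⟩
    exacts [(hp i).ncard_neighborSet_start, (hp i).ncard_neighborSet_end]
  have hrange : Set.range endpoint = {x : V | (M.neighborSet x).ncard = 1} :=
    Set.eq_of_subset_of_ncard_le hsub (by
      rw [hcard, Set.ncard_range_of_injective hinj, Nat.card_sum, Nat.card_eq_fintype_card]
      omega)
  obtain ⟨i | i, rfl⟩ : x ∈ Set.range endpoint := by rwa [hrange]
  exacts [⟨i, Or.inl rfl⟩, ⟨i, Or.inr rfl⟩]

end PathFamily

/-- Let `M` be a 2-limited spanning subgraph of a finite simple graph `G` with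
exactly `2r` vertices of degree 1.  If there exist `r` pairwise vertex-disjoint
`M`-augmenting paths in `G`, then `G` has a 2-factor. -/
theorem twoFactor_of_augmenting_paths {G : SimpleGraph V} [Fintype V]
    (M : G.Subgraph) (hM : IsTwoLimited M) (r : ℕ)
    (hr : {x : V | (M.neighborSet x).ncard = 1}.ncard = 2 * r)
    (hpaths : ∃ (e : Fin r → V × V) (p : ∀ i, G.Walk (e i).1 (e i).2),
      (∀ i, IsAugmentingPath M (p i)) ∧
        ∀ i j, i ≠ j → ∀ x : V, x ∈ (p i).support → x ∉ (p j).support) :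
    ∃ F : G.Subgraph, F.IsSpanning ∧ ∀ v : V, (F.neighborSet v).ncard = 2 := by
  obtain ⟨e, p, hp, hdisj⟩ := hpaths
  have hfilled : ∀ v, (∀ i, v ∈ (p i).support → v ≠ (e i).1 ∧ v ≠ (e i).2) →
      (M.neighborSet v).ncard = 2 := by
    intro v hv
    have hv1 : (M.neighborSet v).ncard ≠ 1 := fun h1 => by
      obtain ⟨i, rfl | rfl⟩ := exists_endpoint_of_ncard_neighborSet_eq_one hp hdisj
        (by rwa [Fintype.card_fin]) h1
      exacts [(hv i (p i).start_mem_support).1 rfl, (hv i (p i).end_mem_support).2 rfl]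
    have := hM.2 v
    omega
  obtain ⟨F, hspan, hF⟩ := M.exists_isSpanning_neighborSet_eq_symmDiff (⨆ i, (p i).toSubgraph)
  refine ⟨F, hspan, fun v => ?_⟩
  rw [hF]
  by_cases hv : ∃ i, v ∈ (p i).support
  · obtain ⟨i, hv⟩ := hv
    rw [neighborSet_iSup_toSubgraph_of_mem hdisj hv]
    refine (hp i).ncard_symmDiff_neighborSet hv fun hu hw => hfilled v fun j hvj => ?_
    obtain rfl : j = i := by_contra fun hji => hdisj i j (Ne.symm hji) v hv hvj
    exact ⟨hu, hw⟩
  · push Not at hv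
    rw [neighborSet_iSup_toSubgraph_of_forall_notMem hv, ← Set.bot_eq_empty, symmDiff_bot]
    exact hfilled v fun i hvi => absurd hvi (hv i)
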